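/- Let f, g ∈ S have ℕ-supports H_f and H_g, where the ℕ-support of f is H_f := {n ∈ ℕ : f(n,x) > 0 for some x ∈ ℤ^d}. Then d(f,g) = 0 if and only if there exist a bijection σ : H_f → H_g and vectors (x_n)_{n∈H_f} in ℤ^d such that g(σ(n), x) = f(n, x + x_n) for all n ∈ H_f and all x ∈ ℤ^d. -/

import Mathlib

open Filter MeasureTheory
open scoped BigOperators Topology ENNReal Classical

namespace DirectedPolymers

/-- The disjoint union of countably many copies of `ℤ^d`. -/
abbrev Site (d : ℕ) := ℕ × (Fin d → ℤ)

/-- `‖u - v‖₁`: the `ℓ¹` distance within a common copy of `ℤ^d`, and `∞` across copies. -/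
noncomputable def dist1 {d : ℕ} (u v : Site d) : ENat :=
  if u.1 = v.1 then ((∑ i, (u.2 i - v.2 i).natAbs : ℕ) : ENat) else ⊤

/-- `u' - v' = u - v` in `ℤ^d ∪ {∞}`: either both differences are taken in the same copy
of `ℤ^d` and agree, or both are `∞`. -/
def sameDiff {d : ℕ} (u' v' u v : Site d) : Prop :=
  (u'.1 = v'.1 ∧ u.1 = v.1 ∧ u'.2 - v'.2 = u.2 - v.2) ∨ (u'.1 ≠ v'.1 ∧ u.1 ≠ v.1)

/-- `φ` is an isometry of degree `m` on `A`:
`φ(u) - φ(v) = u - v` whenever `‖u-v‖₁ < m` or `‖φ(u)-φ(v)‖₁ < m`. -/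
def IsIsoDeg {d : ℕ} (A : Set (Site d)) (φ : Site d → Site d) (m : ENat) : Prop :=
  ∀ u ∈ A, ∀ v ∈ A, (dist1 u v < m ∨ dist1 (φ u) (φ v) < m) → sameDiff (φ u) (φ v) u v

/-- `2^{-m}`, with value `0` at `m = ∞`. -/
noncomputable def twoPowNeg (m : ENat) : ℝ :=
  if m = ⊤ then 0 else (2 : ℝ) ^ (-(m.toNat : ℤ))

/-- The quantity `d_φ(f,g)` associated to an isometry `φ` with finite domain `A` and
degree (at least) `m`. -/
noncomputable def dPhi {d : ℕ} (A : Finset (Site d)) (φ : Site d → Site d) (m : ENat)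
    (f g : Site d → ℝ) : ℝ :=
  2 * ∑ u ∈ A, |f u - g (φ u)|
    + (∑' u : {u : Site d // u ∉ A}, (f u.1) ^ 2)
    + (∑' u : {u : Site d // u ∉ A.image φ}, (g u.1) ^ 2)
    + twoPowNeg m

/-- `d(f,g)`: the infimum of `d_φ(f,g)` over all isometries `φ` with finite domain. -/
noncomputable def pdist {d : ℕ} (f g : Site d → ℝ) : ℝ :=
  sInf { r : ℝ | ∃ (A : Finset (Site d)) (φ : Site d → Site d) (m : ENat),
    1 ≤ m ∧ IsIsoDeg (A : Set (Site d)) φ m ∧ r = dPhi A φ m f g }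

/-- Membership in `S`: nonnegative subprobability mass functions on `ℕ × ℤ^d`. -/
def memS {d : ℕ} (f : Site d → ℝ) : Prop :=
  (∀ u, 0 ≤ f u) ∧ Summable f ∧ (∑' u, f u) ≤ 1


-- AUX LEMMAS START
variable {d : ℕ}

lemma twoPowNeg_nonneg (m : ENat) : 0 ≤ twoPowNeg m := by
  unfold twoPowNeg; split <;> positivity

lemma memS.le_one {f : Site d → ℝ} (hf : memS f) (u : Site d) : f u ≤ 1 :=
  le_trans (Summable.le_tsum hf.2.1 u fun j _ => hf.1 j) hf.2.2

lemma memS.sq_summable {f : Site d → ℝ} (hf : memS f) : Summable (fun u => f u ^ 2) :=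
  Summable.of_nonneg_of_le (fun u => sq_nonneg _)
    (fun u => by nlinarith [hf.1 u, hf.le_one u]) hf.2.1

lemma sum_abs_le_dPhi (f g : Site d → ℝ)
    (A : Finset (Site d)) (φ : Site d → Site d) (m : ENat) {u : Site d} (hu : u ∈ A) :
    2 * |f u - g (φ u)| ≤ dPhi A φ m f g := by
  have h1 : |f u - g (φ u)| ≤ ∑ v ∈ A, |f v - g (φ v)| :=
    Finset.single_le_sum (f := fun v => |f v - g (φ v)|) (fun i _ => abs_nonneg _) hu
  have h2 : (0:ℝ) ≤ ∑' v : {v : Site d // v ∉ A}, (f v.1) ^ 2 :=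
    tsum_nonneg fun _ => sq_nonneg _
  have h3 : (0:ℝ) ≤ ∑' v : {v : Site d // v ∉ A.image φ}, (g v.1) ^ 2 :=
    tsum_nonneg fun _ => sq_nonneg _
  have h4 := twoPowNeg_nonneg m
  unfold dPhi; linarith

lemma f_sq_le_dPhi {f : Site d → ℝ} (g : Site d → ℝ) (hsq : Summable (fun u => f u ^ 2))
    (A : Finset (Site d)) (φ : Site d → Site d) (m : ENat) {u : Site d} (hu : u ∉ A) :
    f u ^ 2 ≤ dPhi A φ m f g := by
  have hs : Summable (fun v : {v : Site d // v ∉ A} => (f v.1) ^ 2) :=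
    hsq.subtype {v : Site d | v ∉ A}
  have h1 : f u ^ 2 ≤ ∑' v : {v : Site d // v ∉ A}, (f v.1) ^ 2 :=
    Summable.le_tsum hs ⟨u, hu⟩ fun j _ => sq_nonneg _
  have h2 : (0:ℝ) ≤ ∑ v ∈ A, |f v - g (φ v)| := Finset.sum_nonneg fun _ _ => abs_nonneg _
  have h3 : (0:ℝ) ≤ ∑' v : {v : Site d // v ∉ A.image φ}, (g v.1) ^ 2 :=
    tsum_nonneg fun _ => sq_nonneg _
  have h4 := twoPowNeg_nonneg m
  unfold dPhi; linarith

lemma g_sq_le_dPhi (f : Site d → ℝ) {g : Site d → ℝ} (hsq : Summable (fun u => g u ^ 2))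
    (A : Finset (Site d)) (φ : Site d → Site d) (m : ENat) {u : Site d}
    (hu : u ∉ A.image φ) :
    g u ^ 2 ≤ dPhi A φ m f g := by
  have hs : Summable (fun v : {v : Site d // v ∉ A.image φ} => (g v.1) ^ 2) :=
    hsq.subtype {v : Site d | v ∉ A.image φ}
  have h1 : g u ^ 2 ≤ ∑' v : {v : Site d // v ∉ A.image φ}, (g v.1) ^ 2 :=
    Summable.le_tsum hs ⟨u, hu⟩ fun j _ => sq_nonneg _
  have h2 : (0:ℝ) ≤ ∑ v ∈ A, |f v - g (φ v)| := Finset.sum_nonneg fun _ _ => abs_nonneg _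
  have h3 : (0:ℝ) ≤ ∑' v : {v : Site d // v ∉ A}, (f v.1) ^ 2 :=
    tsum_nonneg fun _ => sq_nonneg _
  have h4 := twoPowNeg_nonneg m
  unfold dPhi; linarith

lemma twoPowNeg_le_dPhi (f g : Site d → ℝ)
    (A : Finset (Site d)) (φ : Site d → Site d) (m : ENat) :
    twoPowNeg m ≤ dPhi A φ m f g := by
  have h1 : (0:ℝ) ≤ ∑ v ∈ A, |f v - g (φ v)| := Finset.sum_nonneg fun _ _ => abs_nonneg _
  have h2 : (0:ℝ) ≤ ∑' v : {v : Site d // v ∉ A}, (f v.1) ^ 2 :=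
    tsum_nonneg fun _ => sq_nonneg _
  have h3 : (0:ℝ) ≤ ∑' v : {v : Site d // v ∉ A.image φ}, (g v.1) ^ 2 :=
    tsum_nonneg fun _ => sq_nonneg _
  unfold dPhi; linarith

lemma dPhi_nonneg (f g : Site d → ℝ)
    (A : Finset (Site d)) (φ : Site d → Site d) (m : ENat) :
    0 ≤ dPhi A φ m f g :=
  le_trans (twoPowNeg_nonneg m) (twoPowNeg_le_dPhi f g A φ m)

lemma pdist_set_nonempty (f g : Site d → ℝ) :
    { r : ℝ | ∃ (A : Finset (Site d)) (φ : Site d → Site d) (m : ENat),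
      1 ≤ m ∧ IsIsoDeg (A : Set (Site d)) φ m ∧ r = dPhi A φ m f g }.Nonempty :=
  ⟨dPhi ∅ id 1 f g, ∅, id, 1, le_refl _, by rintro u hu; simp at hu, rfl⟩

lemma lt_of_twoPowNeg_lt {m : ENat} {R : ℕ} (h : twoPowNeg m < (2:ℝ) ^ (-(R:ℤ))) :
    (R : ENat) < m := by
  unfold twoPowNeg at h
  rcases eq_or_ne m ⊤ with hm | hm
  · exact hm ▸ Ne.lt_top (by simp)
  · rw [if_neg hm] at h
    have h2 : -(m.toNat : ℤ) < -(R : ℤ) :=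
      (zpow_lt_zpow_iff_right₀ (by norm_num : (1:ℝ) < 2)).1 h
    have hR : R < m.toNat := by omega
    calc (R : ENat) < (m.toNat : ENat) := ENat.coe_lt_coe.2 hR
      _ = m := ENat.coe_toNat hm

lemma dist1_eq_of_fst_eq {u v : Site d} (h : u.1 = v.1) :
    dist1 u v = ((∑ i, (u.2 i - v.2 i).natAbs : ℕ) : ENat) := by
  unfold dist1; rw [if_pos h]

lemma finite_level {f : Site d → ℝ} (hf : Summable f) {c : ℝ} (hc : 0 < c) :
    {u : Site d | c ≤ f u}.Finite := by
  have h := Filter.eventually_cofinite.mp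
    ((Metric.tendsto_nhds.mp hf.tendsto_cofinite_zero) c hc)
  refine h.subset fun u hu => ?_
  simp only [Set.mem_setOf_eq, Real.dist_eq, sub_zero, not_lt]
  exact le_trans hu (le_abs_self _)

lemma ultra_exists_eq {α β : Type*} (U : Ultrafilter α) {h : α → β} {s : Set β}
    (hs : s.Finite) (hm : {k | h k ∈ s} ∈ U) : ∃ v ∈ s, {k | h k = v} ∈ U := by
  by_contra hc
  push_neg at hc
  have h1 : ∀ v ∈ s, {k | h k = v}ᶜ ∈ U := fun v hv =>
    Ultrafilter.compl_mem_iff_notMem.2 (hc v hv)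
  have h2 : (⋂ v ∈ s, {k | h k = v}ᶜ) ∈ U := (Filter.biInter_mem hs).2 h1
  obtain ⟨k, hk1, hk2⟩ := Filter.nonempty_of_mem (Filter.inter_mem hm h2)
  simp only [Set.mem_iInter, Set.mem_compl_iff, Set.mem_setOf_eq] at hk2
  exact hk2 (h k) hk1 rfl


/-- `d(f,g) = 0` iff there are a bijection `σ` between the ℕ-supports of
`f` and `g` and vectors `(x_n)` in `ℤ^d` with `g(σ(n), x) = f(n, x + x_n)` for all
`n` in the ℕ-support of `f` and all `x ∈ ℤ^d`. -/
theorem pdist_eq_zero_iff_translate {d : ℕ} (f g : Site d → ℝ)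
    (hf : memS f) (hg : memS g) :
    pdist f g = 0 ↔ ∃ (σ : ℕ → ℕ) (t : ℕ → Fin d → ℤ),
      Set.BijOn σ {n : ℕ | ∃ x, 0 < f (n, x)} {n : ℕ | ∃ x, 0 < g (n, x)} ∧
      ∀ n ∈ {n : ℕ | ∃ x, 0 < f (n, x)}, ∀ x : Fin d → ℤ,
        g (σ n, x) = f (n, x + t n) := by
  constructor
  · intro hpdist
    classical
    -- extract near-optimal isometries
    have hexlt : ∀ ε : ℝ, 0 < ε → ∃ (A : Finset (Site d)) (φ : Site d → Site d) (m : ENat),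
        IsIsoDeg (A : Set (Site d)) φ m ∧ dPhi A φ m f g < ε := by
      intro ε hε
      by_contra hc
      push_neg at hc
      have hle : ε ≤ pdist f g := by
        unfold pdist
        refine le_csInf (pdist_set_nonempty f g) ?_
        rintro r ⟨A, φ, m, -, hiso, rfl⟩
        exact hc A φ m hiso
      linarith [hle, hpdist ▸ hε]
    have hchoice : ∀ k : ℕ, ∃ (A : Finset (Site d)) (φ : Site d → Site d) (m : ENat),
        IsIsoDeg (A : Set (Site d)) φ m ∧ dPhi A φ m f g < ((k:ℝ)+1)⁻¹ :=
      fun k => hexlt _ (by positivity)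
    choose A φ μ hiso hD using hchoice
    -- ultrafilter extending cofinite
    haveI : (cofinite : Filter ℕ).NeBot := by
      rw [Nat.cofinite_eq_atTop]; exact Filter.atTop_neBot
    obtain ⟨U, hU⟩ := Ultrafilter.exists_le (cofinite : Filter ℕ)
    have hUD : ∀ δ : ℝ, 0 < δ → {k : ℕ | dPhi (A k) (φ k) (μ k) f g < δ} ∈ U := by
      intro δ hδ
      apply hU
      obtain ⟨N, hN⟩ := exists_nat_gt δ⁻¹
      rw [Nat.cofinite_eq_atTop]
      refine Filter.mem_atTop_sets.mpr ⟨N, fun k hk => ?_⟩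
      have h1 : dPhi (A k) (φ k) (μ k) f g < ((k:ℝ)+1)⁻¹ := hD k
      have hk1 : (0:ℝ) < (k:ℝ)+1 := by positivity
      have h3 : δ⁻¹ < (k:ℝ)+1 := lt_of_lt_of_le hN (by
        have : (N:ℝ) ≤ (k:ℝ) := by exact_mod_cast hk
        linarith)
      have h2 : ((k:ℝ)+1)⁻¹ < δ := by
        rw [inv_lt_comm₀ hk1 hδ]
        exact h3
      exact Set.mem_setOf_eq ▸ lt_trans h1 h2
    -- helper membership lemmas
    have hmemA : ∀ (k : ℕ) (u : Site d),
        dPhi (A k) (φ k) (μ k) f g < f u ^ 2 → u ∈ A k := by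
      intro k u h
      by_contra hu
      exact absurd (f_sq_le_dPhi g hf.sq_summable (A k) (φ k) (μ k) hu) (not_le.mpr h)
    have hmemIm : ∀ (k : ℕ) (u : Site d),
        dPhi (A k) (φ k) (μ k) f g < g u ^ 2 → u ∈ (A k).image (φ k) := by
      intro k u h
      by_contra hu
      exact absurd (g_sq_le_dPhi f hg.sq_summable (A k) (φ k) (μ k) hu) (not_le.mpr h)
    have hdeg : ∀ (k : ℕ) (R : ℕ),
        dPhi (A k) (φ k) (μ k) f g < (2:ℝ) ^ (-(R:ℤ)) → (R : ENat) < μ k :=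
      fun k R h => lt_of_twoPowNeg_lt (lt_of_le_of_lt (twoPowNeg_le_dPhi f g _ _ _) h)
    -- base points
    have hpdef : ∀ n : ℕ, ∃ xx : Fin d → ℤ,
        n ∈ {n : ℕ | ∃ x, 0 < f (n, x)} → 0 < f (n, xx) := by
      intro n
      by_cases hn : n ∈ {n : ℕ | ∃ x, 0 < f (n, x)}
      · exact ⟨hn.choose, fun _ => hn.choose_spec⟩
      · exact ⟨0, fun h => absurd h hn⟩
    choose x0 hx0 using hpdef
    -- ultrafilter limit of φ k (n, x0 n)
    have hPhiEx : ∀ n : ℕ, ∃ v : Site d, n ∈ {n : ℕ | ∃ x, 0 < f (n, x)} →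
        (0 < g v ∧ {k : ℕ | φ k (n, x0 n) = v} ∈ U) := by
      intro n
      by_cases hn : n ∈ {n : ℕ | ∃ x, 0 < f (n, x)}
      swap
      · exact ⟨(0,0), fun h => absurd h hn⟩
      have hc : 0 < f (n, x0 n) := hx0 n hn
      have hev : {k : ℕ | φ k (n, x0 n) ∈ {u : Site d | f (n, x0 n)/2 ≤ g u}} ∈ U := by
        refine Filter.mem_of_superset
          (hUD (min (f (n, x0 n)^2) (f (n, x0 n))) (lt_min (pow_pos hc 2) hc)) ?_
        intro k hk
        have hk' : dPhi (A k) (φ k) (μ k) f g < min (f (n, x0 n)^2) (f (n, x0 n)) := hk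
        have hpA : (n, x0 n) ∈ A k :=
          hmemA k _ (lt_of_lt_of_le hk' (min_le_left _ _))
        have h3 := sum_abs_le_dPhi f g (A k) (φ k) (μ k) hpA
        have h4 : dPhi (A k) (φ k) (μ k) f g < f (n, x0 n) :=
          lt_of_lt_of_le hk' (min_le_right _ _)
        show f (n, x0 n)/2 ≤ g (φ k (n, x0 n))
        have h5 : |f (n, x0 n) - g (φ k (n, x0 n))| < f (n, x0 n)/2 := by linarith
        have h6 := (abs_lt.mp h5).2
        linarith
      obtain ⟨v, hvs, hvev⟩ := ultra_exists_eq U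
        (finite_level hg.2.1 (by linarith : (0:ℝ) < f (n, x0 n)/2)) hev
      exact ⟨v, fun _ => ⟨lt_of_lt_of_le (by linarith) hvs, hvev⟩⟩
    choose Φ hΦ using hPhiEx
    have hPg : ∀ n ∈ {n : ℕ | ∃ x, 0 < f (n, x)}, 0 < g (Φ n) := fun n hn => (hΦ n hn).1
    have hPev : ∀ n ∈ {n : ℕ | ∃ x, 0 < f (n, x)},
        {k : ℕ | φ k (n, x0 n) = Φ n} ∈ U := fun n hn => (hΦ n hn).2
    -- main translation identity
    have hmain : ∀ n ∈ {n : ℕ | ∃ x, 0 < f (n, x)}, ∀ x : Fin d → ℤ,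
        g ((Φ n).1, x) = f (n, x + (x0 n - (Φ n).2)) := by
      intro n hn x
      have hev := hPev n hn
      set w : Site d := ((Φ n).1, x) with hw
      set v : Site d := (n, x + (x0 n - (Φ n).2)) with hv
      set R : ℕ := ∑ i, ((x + (x0 n - (Φ n).2)) i - x0 n i).natAbs with hR
      have hd1 : dist1 v (n, x0 n) = (R : ENat) := by
        rw [dist1_eq_of_fst_eq (show v.1 = (n, x0 n).1 from rfl)]
      have hd2 : dist1 w (Φ n) = (R : ENat) := by
        rw [dist1_eq_of_fst_eq (show w.1 = (Φ n).1 from rfl)]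
        norm_cast
        refine Finset.sum_congr rfl fun i _ => ?_
        congr 1
        show x i - (Φ n).2 i = (x + (x0 n - (Φ n).2)) i - x0 n i
        simp [Pi.add_apply, Pi.sub_apply]
        ring
      rcases eq_or_lt_of_le (hf.1 v) with hfv | hfv
      · -- f v = 0
        rcases eq_or_lt_of_le (hg.1 w) with hgw | hgw
        · rw [← hgw, ← hfv]
        · exfalso
          have hδpos : 0 < min (min (g w ^2) (f (n, x0 n)^2))
              (min (g w) ((2:ℝ)^(-(R:ℤ)))) :=
            lt_min (lt_min (pow_pos hgw 2) (pow_pos (hx0 n hn) 2))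
              (lt_min hgw (by positivity))
          obtain ⟨k, hkD, hkev⟩ := Filter.nonempty_of_mem
            (Filter.inter_mem (hUD _ hδpos) hev)
          have hpA : (n, x0 n) ∈ A k := hmemA k _
            (lt_of_lt_of_le hkD (le_trans (min_le_left _ _) (min_le_right _ _)))
          have hwIm : w ∈ (A k).image (φ k) := hmemIm k w
            (lt_of_lt_of_le hkD (le_trans (min_le_left _ _) (min_le_left _ _)))
          obtain ⟨u, huA, huw⟩ := Finset.mem_image.mp hwIm
          have hRμ : (R : ENat) < μ k := hdeg k R
            (lt_of_lt_of_le hkD (le_trans (min_le_right _ _) (min_le_right _ _)))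
          have hdist : dist1 (φ k u) (φ k (n, x0 n)) < μ k := by
            rw [hkev, huw, hd2]; exact hRμ
          have hsd := hiso k u (Finset.mem_coe.mpr huA) (n, x0 n)
            (Finset.mem_coe.mpr hpA) (Or.inr hdist)
          rcases hsd with ⟨h1, h2, h3⟩ | ⟨h1, h2⟩
          · rw [huw, hkev] at h3
            have hu2 : u.2 = x + (x0 n - (Φ n).2) := by
              have h4 : u.2 = w.2 - (Φ n).2 + (n, x0 n).2 := by
                rw [h3]; abel
              rw [h4]
              show x - (Φ n).2 + x0 n = x + (x0 n - (Φ n).2)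
              abel
            have huv : u = v := Prod.ext h2 hu2
            rw [huv] at huw
            have hb := sum_abs_le_dPhi f g (A k) (φ k) (μ k) huA
            rw [huv, huw, ← hfv] at hb
            have habs : |0 - g w| = g w := by rw [zero_sub, abs_neg, abs_of_pos hgw]
            rw [habs] at hb
            have h6 : dPhi (A k) (φ k) (μ k) f g < g w :=
              lt_of_lt_of_le hkD (le_trans (min_le_right _ _) (min_le_left _ _))
            linarith
          · rw [huw, hkev] at h1
            exact h1 rfl
      · -- 0 < f v
        have key : ∀ δ0 : ℝ, 0 < δ0 → |f v - g w| < δ0 := by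
          intro δ0 hδ0
          have hδpos : 0 < min (min (f v ^2) (f (n, x0 n)^2))
              (min (2*δ0) ((2:ℝ)^(-(R:ℤ)))) :=
            lt_min (lt_min (pow_pos hfv 2) (pow_pos (hx0 n hn) 2))
              (lt_min (by linarith) (by positivity))
          obtain ⟨k, hkD, hkev⟩ := Filter.nonempty_of_mem
            (Filter.inter_mem (hUD _ hδpos) hev)
          have hvA : v ∈ A k := hmemA k v
            (lt_of_lt_of_le hkD (le_trans (min_le_left _ _) (min_le_left _ _)))
          have hpA : (n, x0 n) ∈ A k := hmemA k _
            (lt_of_lt_of_le hkD (le_trans (min_le_left _ _) (min_le_right _ _)))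
          have hRμ : (R : ENat) < μ k := hdeg k R
            (lt_of_lt_of_le hkD (le_trans (min_le_right _ _) (min_le_right _ _)))
          have hdist : dist1 v (n, x0 n) < μ k := by rw [hd1]; exact hRμ
          have hsd := hiso k v (Finset.mem_coe.mpr hvA) (n, x0 n)
            (Finset.mem_coe.mpr hpA) (Or.inl hdist)
          rcases hsd with ⟨h1, h2, h3⟩ | ⟨h1, h2⟩
          swap
          · exact absurd rfl h2
          · rw [hkev] at h1 h3
            have hφv : φ k v = w := by
              refine Prod.ext h1 ?_
              have h4 : (φ k v).2 = v.2 - (n, x0 n).2 + (Φ n).2 := by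
                rw [← h3]; abel
              rw [h4]
              show x + (x0 n - (Φ n).2) - x0 n + (Φ n).2 = x
              abel
            have hb := sum_abs_le_dPhi f g (A k) (φ k) (μ k) hvA
            rw [hφv] at hb
            have h5 : dPhi (A k) (φ k) (μ k) f g < 2*δ0 :=
              lt_of_lt_of_le hkD (le_trans (min_le_right _ _) (min_le_left _ _))
            linarith
        by_contra hne
        have h0 : 0 < |f v - g w| :=
          abs_pos.mpr (sub_ne_zero_of_ne (fun hh => hne hh.symm))
        exact absurd (key _ h0) (lt_irrefl _)
    -- injectivity
    have hInj : Set.InjOn (fun n => (Φ n).1) {n : ℕ | ∃ x, 0 < f (n, x)} := by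
      intro n hn n' hn' hσ
      by_contra hne
      set R : ℕ := ∑ i, ((Φ n).2 i - (Φ n').2 i).natAbs with hR
      have hδpos : 0 < min (min (f (n, x0 n) ^2) (f (n', x0 n') ^2)) ((2:ℝ)^(-(R:ℤ))) :=
        lt_min (lt_min (pow_pos (hx0 n hn) 2) (pow_pos (hx0 n' hn') 2)) (by positivity)
      obtain ⟨k, hkD, hkev, hkev'⟩ := Filter.nonempty_of_mem
        (Filter.inter_mem (hUD _ hδpos) (Filter.inter_mem (hPev n hn) (hPev n' hn')))
      have hpA : (n, x0 n) ∈ A k := hmemA k _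
        (lt_of_lt_of_le hkD (le_trans (min_le_left _ _) (min_le_left _ _)))
      have hpA' : (n', x0 n') ∈ A k := hmemA k _
        (lt_of_lt_of_le hkD (le_trans (min_le_left _ _) (min_le_right _ _)))
      have hRμ : (R : ENat) < μ k := hdeg k R (lt_of_lt_of_le hkD (min_le_right _ _))
      have hdist : dist1 (φ k (n, x0 n)) (φ k (n', x0 n')) < μ k := by
        rw [hkev, hkev', dist1_eq_of_fst_eq hσ]
        exact hRμ
      have hsd := hiso k (n, x0 n) (Finset.mem_coe.mpr hpA) (n', x0 n')
        (Finset.mem_coe.mpr hpA') (Or.inr hdist)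
      rcases hsd with ⟨h1, h2, h3⟩ | ⟨h1, h2⟩
      · exact hne h2
      · rw [hkev, hkev'] at h1
        exact h1 hσ
    -- maps to
    have hMaps : Set.MapsTo (fun n => (Φ n).1)
        {n : ℕ | ∃ x, 0 < f (n, x)} {n : ℕ | ∃ x, 0 < g (n, x)} := by
      intro n hn
      exact ⟨(Φ n).2, by rw [Prod.mk.eta]; exact hPg n hn⟩
    -- surjectivity
    have hSurj : Set.SurjOn (fun n => (Φ n).1)
        {n : ℕ | ∃ x, 0 < f (n, x)} {n : ℕ | ∃ x, 0 < g (n, x)} := by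
      intro b hb
      obtain ⟨y, hy⟩ := hb
      set w : Site d := (b, y) with hwdef
      set vsel : ℕ → Site d :=
        fun k => if h : ∃ u, u ∈ A k ∧ φ k u = w then h.choose else (0, 0) with hvsel
      have hev1 : {k : ℕ | vsel k ∈ {u : Site d | g w/2 ≤ f u}} ∈ U := by
        refine Filter.mem_of_superset
          (hUD (min (g w^2) (g w)) (lt_min (pow_pos hy 2) hy)) ?_
        intro k hk
        have hk' : dPhi (A k) (φ k) (μ k) f g < min (g w^2) (g w) := hk
        have hwIm : w ∈ (A k).image (φ k) :=
          hmemIm k w (lt_of_lt_of_le hk' (min_le_left _ _))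
        have hex : ∃ u, u ∈ A k ∧ φ k u = w := by
          obtain ⟨u, hu1, hu2⟩ := Finset.mem_image.mp hwIm
          exact ⟨u, hu1, hu2⟩
        have hspec := hex.choose_spec
        have hb2 := sum_abs_le_dPhi f g (A k) (φ k) (μ k) hspec.1
        rw [hspec.2] at hb2
        have h4 : dPhi (A k) (φ k) (μ k) f g < g w :=
          lt_of_lt_of_le hk' (min_le_right _ _)
        show g w/2 ≤ f (vsel k)
        simp only [hvsel]
        rw [dif_pos hex]
        have h5 : |f hex.choose - g w| < g w/2 := by linarith
        have h6 := (abs_lt.mp h5).1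
        linarith
      obtain ⟨v0, hv0s, hv0ev⟩ := ultra_exists_eq U
        (finite_level hf.2.1 (by linarith : (0:ℝ) < g w/2)) hev1
      have hfv0 : 0 < f v0 := lt_of_lt_of_le (by linarith) hv0s
      have hn : v0.1 ∈ {n : ℕ | ∃ x, 0 < f (n, x)} := ⟨v0.2, by rwa [Prod.mk.eta]⟩
      refine ⟨v0.1, hn, ?_⟩
      show (Φ v0.1).1 = b
      set n := v0.1 with hndef
      set R : ℕ := ∑ i, (v0.2 i - x0 n i).natAbs with hR
      have hδpos : 0 < min (min (g w^2) (f (n, x0 n)^2)) ((2:ℝ)^(-(R:ℤ))) :=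
        lt_min (lt_min (pow_pos hy 2) (pow_pos (hx0 n hn) 2)) (by positivity)
      obtain ⟨k, hkD, hkev, hkv⟩ := Filter.nonempty_of_mem
        (Filter.inter_mem (hUD _ hδpos) (Filter.inter_mem (hPev n hn) hv0ev))
      have hwIm : w ∈ (A k).image (φ k) := hmemIm k w
        (lt_of_lt_of_le hkD (le_trans (min_le_left _ _) (min_le_left _ _)))
      have hex : ∃ u, u ∈ A k ∧ φ k u = w := by
        obtain ⟨u, hu1, hu2⟩ := Finset.mem_image.mp hwIm
        exact ⟨u, hu1, hu2⟩
      have hspec := hex.choose_spec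
      have hveq : hex.choose = v0 := by
        have hvk : vsel k = hex.choose := by
          simp only [hvsel]; rw [dif_pos hex]
        rw [← hvk]
        exact hkv
      have hv0A : v0 ∈ A k := hveq ▸ hspec.1
      have hφv0 : φ k v0 = w := hveq ▸ hspec.2
      have hpA : (n, x0 n) ∈ A k := hmemA k _
        (lt_of_lt_of_le hkD (le_trans (min_le_left _ _) (min_le_right _ _)))
      have hRμ : (R : ENat) < μ k := hdeg k R (lt_of_lt_of_le hkD (min_le_right _ _))
      have hdist : dist1 v0 (n, x0 n) < μ k := by
        rw [dist1_eq_of_fst_eq (show v0.1 = (n, x0 n).1 from rfl)]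
        exact hRμ
      have hsd := hiso k v0 (Finset.mem_coe.mpr hv0A) (n, x0 n)
        (Finset.mem_coe.mpr hpA) (Or.inl hdist)
      rcases hsd with ⟨h1, -, -⟩ | ⟨-, h2⟩
      · rw [hφv0, hkev] at h1
        exact h1.symm
      · exact absurd rfl h2
    exact ⟨fun n => (Φ n).1, fun n => x0 n - (Φ n).2, ⟨hMaps, hInj, hSurj⟩, hmain⟩
  · rintro ⟨σ, t, hbij, htr⟩
    classical
    set Φ : Site d → Site d := fun u => (σ u.1, u.2 - t u.1) with hΦdef
    have hmemHf : ∀ u : Site d, 0 < f u → u.1 ∈ {n : ℕ | ∃ x, 0 < f (n, x)} :=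
      fun u hu => ⟨u.2, by rwa [Prod.mk.eta]⟩
    have hgf : ∀ u : Site d, u.1 ∈ {n : ℕ | ∃ x, 0 < f (n, x)} → g (Φ u) = f u := by
      intro u hu
      have h1 : u.2 - t u.1 + t u.1 = u.2 := by abel
      have h2 := htr u.1 hu (u.2 - t u.1)
      rw [h1] at h2
      simp only [hΦdef]
      rw [h2, Prod.mk.eta]
    have hex2 : ∀ u : Site d, 0 < g u → ∃ v : Site d, 0 < f v ∧ Φ v = u := by
      intro u hu
      have hu1 : u.1 ∈ {n : ℕ | ∃ x, 0 < g (n, x)} := ⟨u.2, by rwa [Prod.mk.eta]⟩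
      obtain ⟨n, hn, hσn⟩ := hbij.2.2 hu1
      refine ⟨(n, u.2 + t n), ?_, ?_⟩
      · rw [← htr n hn u.2, hσn, Prod.mk.eta]; exact hu
      · simp only [hΦdef]
        have h3 : u.2 + t n - t n = u.2 := by abel
        rw [h3, hσn, Prod.mk.eta]
    have hmem_lt : ∀ ε : ℝ, 0 < ε →
        ∃ r ∈ { r : ℝ | ∃ (A : Finset (Site d)) (φ : Site d → Site d) (m : ENat),
          1 ≤ m ∧ IsIsoDeg (A : Set (Site d)) φ m ∧ r = dPhi A φ m f g }, r < ε := by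
      intro ε hε
      obtain ⟨F, hF⟩ := ((tendsto_tsum_compl_atTop_zero (fun u : Site d => f u ^ 2)).eventually
        (gt_mem_nhds (show (0:ℝ) < ε/4 by linarith))).exists
      obtain ⟨G, hG⟩ := ((tendsto_tsum_compl_atTop_zero (fun u : Site d => g u ^ 2)).eventually
        (gt_mem_nhds (show (0:ℝ) < ε/4 by linarith))).exists
      set vset : Site d → Site d :=
        fun u => if h : ∃ v : Site d, 0 < f v ∧ Φ v = u then h.choose else u with hvset
      set A : Finset (Site d) :=
        F.filter (fun u => 0 < f u) ∪ (G.filter (fun u => 0 < g u)).image vset with hA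
      have hApos : ∀ u ∈ A, 0 < f u := by
        intro u hu
        rcases Finset.mem_union.mp hu with h | h
        · exact (Finset.mem_filter.mp h).2
        · obtain ⟨w, hw, rfl⟩ := Finset.mem_image.mp h
          have hgw : 0 < g w := (Finset.mem_filter.mp hw).2
          have hex := hex2 w hgw
          simp only [hvset]
          rw [dif_pos hex]
          exact hex.choose_spec.1
      have hiso : IsIsoDeg (A : Set (Site d)) Φ ⊤ := by
        intro u hu v hv _
        have hu1 := hmemHf u (hApos u (Finset.mem_coe.mp hu))
        have hv1 := hmemHf v (hApos v (Finset.mem_coe.mp hv))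
        by_cases h : u.1 = v.1
        · left
          refine ⟨?_, h, ?_⟩
          · simp only [hΦdef]; rw [h]
          · simp only [hΦdef]; rw [h]; abel
        · right
          exact ⟨fun hσ => h (hbij.2.1 hu1 hv1 (by simpa [hΦdef] using hσ)), h⟩
      refine ⟨dPhi A Φ ⊤ f g, ⟨A, Φ, ⊤, le_top, hiso, rfl⟩, ?_⟩
      have hsum0 : ∑ u ∈ A, |f u - g (Φ u)| = 0 :=
        Finset.sum_eq_zero fun u hu => by
          rw [hgf u (hmemHf u (hApos u hu))]; simp
      -- f tail
      have htail_f : (∑' u : {u : Site d // u ∉ A}, (f u.1) ^ 2) < ε/4 := by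
        have e1 : (∑' u : {u : Site d // u ∉ A}, (f u.1) ^ 2)
            = ∑' u, Set.indicator {u : Site d | u ∉ A} (fun u => f u ^ 2) u :=
          tsum_subtype {u : Site d | u ∉ A} (fun u => f u ^ 2)
        have e2 : (∑' u : {u : Site d // u ∉ F}, (f u.1) ^ 2)
            = ∑' u, Set.indicator {u : Site d | u ∉ F} (fun u => f u ^ 2) u :=
          tsum_subtype {u : Site d | u ∉ F} (fun u => f u ^ 2)
        have h3 : ∀ u, Set.indicator {u : Site d | u ∉ A} (fun u => f u ^ 2) u
            ≤ Set.indicator {u : Site d | u ∉ F} (fun u => f u ^ 2) u := by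
          intro u
          by_cases hAu : u ∈ A
          · rw [Set.indicator_of_notMem (by simpa using hAu)]
            exact Set.indicator_nonneg (fun _ _ => sq_nonneg _) u
          · rw [Set.indicator_of_mem (show u ∈ {u : Site d | u ∉ A} from hAu)]
            by_cases hFu : u ∈ F
            · have hf0 : f u = 0 := by
                by_contra hne
                have hpos : 0 < f u := lt_of_le_of_ne (hf.1 u) (Ne.symm hne)
                exact hAu (Finset.mem_union_left _ (Finset.mem_filter.mpr ⟨hFu, hpos⟩))
              rw [hf0]
              simpa using Set.indicator_nonneg
                (fun (a : Site d) _ => sq_nonneg (f a)) u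
            · rw [Set.indicator_of_mem (show u ∈ {u : Site d | u ∉ F} from hFu)]
        calc (∑' u : {u : Site d // u ∉ A}, (f u.1) ^ 2)
            = ∑' u, Set.indicator {u : Site d | u ∉ A} (fun u => f u ^ 2) u := e1
          _ ≤ ∑' u, Set.indicator {u : Site d | u ∉ F} (fun u => f u ^ 2) u :=
              Summable.tsum_le_tsum h3 (hf.sq_summable.indicator _) (hf.sq_summable.indicator _)
          _ = ∑' u : {u : Site d // u ∉ F}, (f u.1) ^ 2 := e2.symm
          _ < ε/4 := hF
      -- g tail
      have htail_g : (∑' u : {u : Site d // u ∉ A.image Φ}, (g u.1) ^ 2) < ε/4 := by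
        have e1 : (∑' u : {u : Site d // u ∉ A.image Φ}, (g u.1) ^ 2)
            = ∑' u, Set.indicator {u : Site d | u ∉ A.image Φ} (fun u => g u ^ 2) u :=
          tsum_subtype {u : Site d | u ∉ A.image Φ} (fun u => g u ^ 2)
        have e2 : (∑' u : {u : Site d // u ∉ G}, (g u.1) ^ 2)
            = ∑' u, Set.indicator {u : Site d | u ∉ G} (fun u => g u ^ 2) u :=
          tsum_subtype {u : Site d | u ∉ G} (fun u => g u ^ 2)
        have h3 : ∀ u, Set.indicator {u : Site d | u ∉ A.image Φ} (fun u => g u ^ 2) u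
            ≤ Set.indicator {u : Site d | u ∉ G} (fun u => g u ^ 2) u := by
          intro u
          by_cases hAu : u ∈ A.image Φ
          · rw [Set.indicator_of_notMem (by simpa using hAu)]
            exact Set.indicator_nonneg (fun _ _ => sq_nonneg _) u
          · rw [Set.indicator_of_mem (show u ∈ {u : Site d | u ∉ A.image Φ} from hAu)]
            by_cases hGu : u ∈ G
            · have hg0 : g u = 0 := by
                by_contra hne
                have hpos : 0 < g u := lt_of_le_of_ne (hg.1 u) (Ne.symm hne)
                have hex := hex2 u hpos
                have hmemA : vset u ∈ A := Finset.mem_union_right _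
                  (Finset.mem_image_of_mem vset (Finset.mem_filter.mpr ⟨hGu, hpos⟩))
                have hΦv : Φ (vset u) = u := by
                  simp only [hvset]; rw [dif_pos hex]; exact hex.choose_spec.2
                exact hAu (Finset.mem_image.mpr ⟨vset u, hmemA, hΦv⟩)
              rw [hg0]
              simpa using Set.indicator_nonneg
                (fun (a : Site d) _ => sq_nonneg (g a)) u
            · rw [Set.indicator_of_mem (show u ∈ {u : Site d | u ∉ G} from hGu)]
        calc (∑' u : {u : Site d // u ∉ A.image Φ}, (g u.1) ^ 2)
            = ∑' u, Set.indicator {u : Site d | u ∉ A.image Φ} (fun u => g u ^ 2) u := e1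
          _ ≤ ∑' u, Set.indicator {u : Site d | u ∉ G} (fun u => g u ^ 2) u :=
              Summable.tsum_le_tsum h3 (hg.sq_summable.indicator _) (hg.sq_summable.indicator _)
          _ = ∑' u : {u : Site d // u ∉ G}, (g u.1) ^ 2 := e2.symm
          _ < ε/4 := hG
      have htop : twoPowNeg ⊤ = 0 := by unfold twoPowNeg; simp
      unfold dPhi
      rw [hsum0, htop]
      linarith
    -- conclude pdist = 0
    have hlb : 0 ≤ pdist f g := by
      unfold pdist
      refine le_csInf (pdist_set_nonempty f g) ?_
      rintro r ⟨A, φ, m, -, -, rfl⟩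
      exact dPhi_nonneg f g A φ m
    rcases eq_or_lt_of_le hlb with h | h
    · exact h.symm
    · exfalso
      obtain ⟨r, hrS, hrlt⟩ := hmem_lt _ h
      have h2 : pdist f g ≤ r := by
        unfold pdist
        refine csInf_le ⟨0, ?_⟩ hrS
        rintro r' ⟨A, φ, m, -, -, rfl⟩
        exact dPhi_nonneg f g A φ m
      linarith

end DirectedPolymers
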